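/- If γ and γ' are κ×κ symmetric positive semidefinite matrices with γ ≤ γ' (meaning γ' − γ is positive semidefinite), then for any p ≥ 1 and any vector β ∈ ℝ^κ, the Hadamard products satisfy γ^{∘p} ∘ (ββᵀ) ≤ γ'^{∘p} ∘ (ββᵀ) in the positive semidefinite order, where γ^{∘p} denotes the entrywise p-th power. -/

import Mathlib

open Matrix
open scoped ComplexOrder

/-!
Let `0 ≤ A ≤ B`. Entrywise powers are iterated Hadamard products, so the Schur product theorem
gives `0 ≤ A^{∘p}`, and the telescoping identity
`B^{∘(k+1)} - A^{∘(k+1)} = B^{∘k} ∘ (B - A) + (B^{∘k} - A^{∘k}) ∘ A`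
gives `A^{∘p} ≤ B^{∘p}` by induction on `p`. A further Hadamard product with the positive
semidefinite matrix `ββᵀ` preserves the order, again by the Schur product theorem.
-/

namespace Matrix

variable {ι 𝕜 : Type*} [RCLike 𝕜]

theorem sub_hadamard {m n R : Type*} [NonUnitalNonAssocRing R] (A B C : Matrix m n R) :
    (A - B) ⊙ C = A ⊙ C - B ⊙ C := by
  ext i j
  exact sub_mul _ _ _

theorem PosSemidef.hadamard_pow [Finite ι] {A : Matrix ι ι 𝕜} (hA : A.PosSemidef) (p : ℕ) :
    (of fun i j => A i j ^ p).PosSemidef := by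
  induction p with
  | zero =>
    have hones : (of fun i j : ι => A i j ^ 0) = vecMulVec 1 (star 1) := by
      ext i j
      simp [vecMulVec_apply]
    rw [hones]
    exact posSemidef_vecMulVec_self_star 1
  | succ k ih =>
    have hsucc : (of fun i j => A i j ^ (k + 1)) = (of fun i j => A i j ^ k) ⊙ A := by
      ext i j
      simp [pow_succ]
    rw [hsucc]
    exact ih.hadamard hA

theorem PosSemidef.hadamard_pow_sub_hadamard_pow [Finite ι] {A B : Matrix ι ι 𝕜}
    (hA : A.PosSemidef) (hAB : (B - A).PosSemidef) (p : ℕ) :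
    ((of fun i j => B i j ^ p) - of fun i j => A i j ^ p).PosSemidef := by
  have hB : B.PosSemidef := by simpa using hA.add hAB
  induction p with
  | zero => simpa using PosSemidef.zero
  | succ k ih =>
    have htelescope : ((of fun i j => B i j ^ (k + 1)) - of fun i j => A i j ^ (k + 1))
        = (of fun i j => B i j ^ k) ⊙ (B - A)
          + ((of fun i j => B i j ^ k) - of fun i j => A i j ^ k) ⊙ A := by
      ext i j
      simp only [sub_apply, add_apply, hadamard_apply, of_apply]
      ring
    rw [htelescope]
    exact ((hB.hadamard_pow k).hadamard hAB).add (ih.hadamard hA)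

end Matrix

theorem stmt_1_general (κ : ℕ) (γ γ' : Matrix (Fin κ) (Fin κ) ℝ)
    (hγ : γ.PosSemidef) (hle : (γ' - γ).PosSemidef)
    (p : ℕ) (β : Fin κ → ℝ) :
    (Matrix.hadamard (Matrix.of fun i j => γ' i j ^ p) (Matrix.vecMulVec β β)
      - Matrix.hadamard (Matrix.of fun i j => γ i j ^ p) (Matrix.vecMulVec β β)).PosSemidef := by
  have hβ : (vecMulVec β β).PosSemidef := by
    simpa using posSemidef_vecMulVec_self_star β
  rw [← sub_hadamard]
  exact (hγ.hadamard_pow_sub_hadamard_pow hle p).hadamard hβ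

/-- If γ ≤ γ' in the PSD order then γ^{∘p} ∘ (ββᵀ) ≤ γ'^{∘p} ∘ (ββᵀ) in the PSD order. -/
theorem stmt_1 (κ : ℕ) (γ γ' : Matrix (Fin κ) (Fin κ) ℝ)
    (hγ : γ.PosSemidef) (hγ' : γ'.PosSemidef) (hle : (γ' - γ).PosSemidef)
    (p : ℕ) (hp : 1 ≤ p) (β : Fin κ → ℝ) :
    (Matrix.hadamard (Matrix.of fun i j => γ' i j ^ p) (Matrix.vecMulVec β β)
      - Matrix.hadamard (Matrix.of fun i j => γ i j ^ p) (Matrix.vecMulVec β β)).PosSemidef :=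
  stmt_1_general κ γ γ' hγ hle p β
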